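/- arXiv:2605.17410 — 4 statements merged into one kernel-verified Lean document; each statement's English description precedes it below -/
import Mathlib

section
/- Let N, B, k be natural numbers with 1 ≤ B ≤ N and k ≤ N, let Q be a fixed subset of {1,…,N} with |Q| = k, and let H be a uniformly random B-element subset of {1,…,N}. Let f be any function assigning to each possible query outcome A ⊆ Q a selection f(A) ⊆ {1,…,N} of unqueried tokens, i.e. f(A) ∩ Q = ∅ and |f(A)| ≤ B for all A. Then the expected number of high-value tokens among the selected unqueried tokens satisfies E[|f(H ∩ Q) ∩ H|] ≤ B²/N. -/
open Finset

/-- Swapping two non-query elements gives a bijection between fibers. -/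
private lemma swap_fiber_card (I Q A : Finset ℕ) (B : ℕ) (i j : ℕ)
    (hiI : i ∈ I) (hiQ : i ∉ Q) (hjI : j ∈ I) (hjQ : j ∉ Q) :
    ((I.powersetCard B).filter (fun H => H ∩ Q = A ∧ i ∈ H)).card
      = ((I.powersetCard B).filter (fun H => H ∩ Q = A ∧ j ∈ H)).card := by
  set σ := Equiv.swap i j with hσ
  have hmem : ∀ (H : Finset ℕ) (x : ℕ), x ∈ H.map σ.toEmbedding ↔ σ x ∈ H := by
    intro H x
    rw [Finset.mem_map_equiv, hσ, Equiv.symm_swap]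
  have hfix : ∀ q ∈ Q, σ q = q := by
    intro q hq
    exact Equiv.swap_apply_of_ne_of_ne (fun h => hiQ (h ▸ hq)) (fun h => hjQ (h ▸ hq))
  have hkey : ∀ H : Finset ℕ, H ∈ (I.powersetCard B).filter (fun H => H ∩ Q = A ∧ i ∈ H) →
      H.map σ.toEmbedding ∈ (I.powersetCard B).filter (fun H => H ∩ Q = A ∧ j ∈ H) := by
    intro H hH
    rw [mem_filter, mem_powersetCard] at hH ⊢
    obtain ⟨⟨hHI, hHB⟩, hHQ, hiH⟩ := hH
    refine ⟨⟨?_, by rw [card_map, hHB]⟩, ?_, ?_⟩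
    · intro x hx
      rw [hmem] at hx
      rcases eq_or_ne x i with rfl | hxi
      · exact hiI
      rcases eq_or_ne x j with rfl | hxj
      · exact hjI
      · rw [hσ, Equiv.swap_apply_of_ne_of_ne hxi hxj] at hx
        exact hHI hx
    · rw [← hHQ]
      ext q
      simp only [mem_inter, hmem]
      constructor
      · rintro ⟨h1, h2⟩
        rw [hfix q h2] at h1
        exact ⟨h1, h2⟩
      · rintro ⟨h1, h2⟩
        rw [hfix q h2]
        exact ⟨h1, h2⟩
    · rw [hmem, hσ, Equiv.swap_apply_right]
      exact hiH
  have hkey' : ∀ H : Finset ℕ, H ∈ (I.powersetCard B).filter (fun H => H ∩ Q = A ∧ j ∈ H) →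
      H.map σ.toEmbedding ∈ (I.powersetCard B).filter (fun H => H ∩ Q = A ∧ i ∈ H) := by
    intro H hH
    rw [mem_filter, mem_powersetCard] at hH ⊢
    obtain ⟨⟨hHI, hHB⟩, hHQ, hjH⟩ := hH
    refine ⟨⟨?_, by rw [card_map, hHB]⟩, ?_, ?_⟩
    · intro x hx
      rw [hmem] at hx
      rcases eq_or_ne x i with rfl | hxi
      · exact hiI
      rcases eq_or_ne x j with rfl | hxj
      · exact hjI
      · rw [hσ, Equiv.swap_apply_of_ne_of_ne hxi hxj] at hx
        exact hHI hx
    · rw [← hHQ]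
      ext q
      simp only [mem_inter, hmem]
      constructor
      · rintro ⟨h1, h2⟩
        rw [hfix q h2] at h1
        exact ⟨h1, h2⟩
      · rintro ⟨h1, h2⟩
        rw [hfix q h2]
        exact ⟨h1, h2⟩
    · rw [hmem, hσ, Equiv.swap_apply_left]
      exact hjH
  have hinv : ∀ H : Finset ℕ, (H.map σ.toEmbedding).map σ.toEmbedding = H := by
    intro H
    ext x
    rw [hmem, hmem, hσ, Equiv.swap_apply_self]
  exact Finset.card_bij' (fun H _ => H.map σ.toEmbedding) (fun H _ => H.map σ.toEmbedding)
    hkey hkey' (fun H _ => hinv H) (fun H _ => hinv H)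

/-- If `H` is a uniformly random `B`-element subset of `{1,…,N}`, `Q` a fixed query set of
size `k`, and `f` any selection rule assigning to each possible query outcome `A ⊆ Q` a set
`f A` of unqueried tokens (`f A ⊆ {1,…,N}`, `f A ∩ Q = ∅`, `|f A| ≤ B`), then the expected
number of high-value tokens among the selected unqueried tokens satisfies
`E[|f(H ∩ Q) ∩ H|] ≤ B²/N`. -/
theorem stmt_4 (N B k : ℕ) (hB1 : 1 ≤ B) (hBN : B ≤ N) (hk : k ≤ N)
    (Q : Finset ℕ) (hQ : Q ⊆ Finset.Icc 1 N) (hQk : Q.card = k)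
    (f : Finset ℕ → Finset ℕ)
    (hf1 : ∀ A ⊆ Q, f A ⊆ Finset.Icc 1 N)
    (hf2 : ∀ A ⊆ Q, f A ∩ Q = ∅)
    (hf3 : ∀ A ⊆ Q, (f A).card ≤ B) :
    (∑ H ∈ (Finset.Icc 1 N).powersetCard B, ((f (H ∩ Q) ∩ H).card : ℝ))
        / (N.choose B : ℝ)
      ≤ (B : ℝ) ^ 2 / N := by
  have hN1 : 1 ≤ N := le_trans hB1 hBN
  set I : Finset ℕ := Finset.Icc 1 N with hI
  have hIcard : I.card = N := by rw [hI, Nat.card_Icc]; omega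
  set P : Finset (Finset ℕ) := I.powersetCard B with hP
  by_cases hne : (I \ Q).Nonempty
  · obtain ⟨i₀, hi₀⟩ := hne
    rw [mem_sdiff] at hi₀
    obtain ⟨hi₀I, hi₀Q⟩ := hi₀
    set c : Finset ℕ → ℕ → ℕ :=
      fun A i => (P.filter (fun H => H ∩ Q = A ∧ i ∈ H)).card with hc
    -- Step 1: fiber decomposition
    have hmaps : ∀ H ∈ P, H ∩ Q ∈ Q.powerset := by
      intro H _
      exact mem_powerset.mpr inter_subset_right
    have step1 : ∑ H ∈ P, (f (H ∩ Q) ∩ H).card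
        = ∑ A ∈ Q.powerset, ∑ H ∈ P.filter (fun H => H ∩ Q = A), (f A ∩ H).card := by
      rw [← Finset.sum_fiberwise_of_maps_to hmaps (fun H => (f (H ∩ Q) ∩ H).card)]
      refine Finset.sum_congr rfl (fun A _ => Finset.sum_congr rfl (fun H hH => ?_))
      rw [(mem_filter.mp hH).2]
    -- Step 2: inner sum as sum over selected tokens
    have step2 : ∀ A ∈ Q.powerset,
        ∑ H ∈ P.filter (fun H => H ∩ Q = A), (f A ∩ H).card
          = ∑ i ∈ f A, c A i := by
      intro A _
      have h1 : ∀ H : Finset ℕ, (f A ∩ H).card = ∑ i ∈ f A, if i ∈ H then 1 else 0 := by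
        intro H
        rw [← Finset.filter_mem_eq_inter, Finset.card_filter]
      simp only [h1]
      rw [Finset.sum_comm]
      refine Finset.sum_congr rfl (fun i _ => ?_)
      rw [← Finset.card_filter, Finset.filter_filter]
    -- Step 3: each count equals that of the fixed witness i₀
    have step3 : ∀ A ∈ Q.powerset, ∀ i ∈ f A, c A i = c A i₀ := by
      intro A hA i hi
      have hAQ := mem_powerset.mp hA
      have hiI : i ∈ I := hf1 A hAQ hi
      have hiQ : i ∉ Q := by
        intro h
        have : i ∈ f A ∩ Q := mem_inter.mpr ⟨hi, h⟩
        rw [hf2 A hAQ] at this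
        exact absurd this (notMem_empty i)
      exact swap_fiber_card I Q A B i i₀ hiI hiQ hi₀I hi₀Q
    -- Step 5: summing the fixed-witness counts over all outcomes
    have step5 : ∑ A ∈ Q.powerset, c A i₀ = (P.filter (fun H => i₀ ∈ H)).card := by
      have hmaps' : ∀ H ∈ P.filter (fun H => i₀ ∈ H), H ∩ Q ∈ Q.powerset := by
        intro H _
        exact mem_powerset.mpr inter_subset_right
      have := Finset.sum_fiberwise_of_maps_to hmaps' (fun _ => (1 : ℕ))
      simp only [Finset.sum_const, smul_eq_mul, mul_one] at this
      rw [← this]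
      refine Finset.sum_congr rfl (fun A _ => ?_)
      simp only [hc]
      rw [Finset.filter_filter]
      congr 1
      exact Finset.filter_congr (fun H _ => and_comm)
    -- Step 6: the fixed-witness count is (N-1).choose (B-1)
    have step6 : (P.filter (fun H => i₀ ∈ H)).card = (N - 1).choose (B - 1) := by
      have hbij : (P.filter (fun H => i₀ ∈ H)).card
          = ((I.erase i₀).powersetCard (B - 1)).card := by
        refine Finset.card_bij' (fun H _ => H.erase i₀) (fun S _ => insert i₀ S) ?_ ?_ ?_ ?_
        · intro H hH
          rw [mem_filter, hP, mem_powersetCard] at hH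
          obtain ⟨⟨hHI, hHB⟩, hiH⟩ := hH
          rw [mem_powersetCard]
          exact ⟨Finset.erase_subset_erase i₀ hHI, by rw [Finset.card_erase_of_mem hiH, hHB]⟩
        · intro S hS
          rw [mem_powersetCard] at hS
          obtain ⟨hSI, hSB⟩ := hS
          have hi₀S : i₀ ∉ S := fun h => (Finset.notMem_erase i₀ I) (hSI h)
          rw [mem_filter, hP, mem_powersetCard]
          refine ⟨⟨?_, ?_⟩, Finset.mem_insert_self i₀ S⟩
          · intro x hx
            rcases Finset.mem_insert.mp hx with rfl | hx
            · exact hi₀I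
            · exact (Finset.erase_subset i₀ I) (hSI hx)
          · rw [Finset.card_insert_of_notMem hi₀S, hSB]
            omega
        · intro H hH
          exact Finset.insert_erase (mem_filter.mp hH).2
        · intro S hS
          rw [mem_powersetCard] at hS
          exact Finset.erase_insert (fun h => (Finset.notMem_erase i₀ I) (hS.1 h))
      rw [hbij, Finset.card_powersetCard, Finset.card_erase_of_mem hi₀I, hIcard]
    -- Combine: the numerator sum is at most B * (N-1).choose (B-1)
    have key : ∑ H ∈ P, (f (H ∩ Q) ∩ H).card ≤ B * (N - 1).choose (B - 1) := by
      rw [step1]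
      calc ∑ A ∈ Q.powerset, ∑ H ∈ P.filter (fun H => H ∩ Q = A), (f A ∩ H).card
          = ∑ A ∈ Q.powerset, ∑ i ∈ f A, c A i := Finset.sum_congr rfl step2
        _ = ∑ A ∈ Q.powerset, (f A).card * c A i₀ := by
            refine Finset.sum_congr rfl (fun A hA => ?_)
            rw [Finset.sum_congr rfl (step3 A hA), Finset.sum_const, smul_eq_mul]
        _ ≤ ∑ A ∈ Q.powerset, B * c A i₀ := by
            refine Finset.sum_le_sum (fun A hA => ?_)
            exact Nat.mul_le_mul_right _ (hf3 A (mem_powerset.mp hA))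
        _ = B * ∑ A ∈ Q.powerset, c A i₀ := by rw [Finset.mul_sum]
        _ = B * (N - 1).choose (B - 1) := by rw [step5, step6]
    -- The binomial identity
    have hid : N * (N - 1).choose (B - 1) = N.choose B * B := by
      have := Nat.add_one_mul_choose_eq (N - 1) (B - 1)
      have h1 : N - 1 + 1 = N := by omega
      have h2 : B - 1 + 1 = B := by omega
      rwa [h1, h2] at this
    have hCpos : 0 < N.choose B := Nat.choose_pos hBN
    have hfinal : (∑ H ∈ P, (f (H ∩ Q) ∩ H).card) * N ≤ B ^ 2 * N.choose B := by
      calc (∑ H ∈ P, (f (H ∩ Q) ∩ H).card) * N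
          ≤ B * (N - 1).choose (B - 1) * N := Nat.mul_le_mul_right _ key
        _ = B * (N * (N - 1).choose (B - 1)) := by ring
        _ = B * (N.choose B * B) := by rw [hid]
        _ = B ^ 2 * N.choose B := by ring
    rw [div_le_div_iff₀ (by exact_mod_cast hCpos) (by exact_mod_cast hN1)]
    push_cast
    calc (∑ H ∈ I.powersetCard B, ((f (H ∩ Q) ∩ H).card : ℝ)) * N
        = (((∑ H ∈ P, (f (H ∩ Q) ∩ H).card) * N : ℕ) : ℝ) := by push_cast [hP]; ring
      _ ≤ ((B ^ 2 * N.choose B : ℕ) : ℝ) := by exact_mod_cast hfinal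
      _ = (B : ℝ) ^ 2 * N.choose B := by push_cast; ring
  · -- No unqueried tokens at all: every selection is empty
    rw [Finset.not_nonempty_iff_eq_empty] at hne
    have hzero : ∀ H ∈ P, ((f (H ∩ Q) ∩ H).card : ℝ) = 0 := by
      intro H _
      have hAQ : H ∩ Q ⊆ Q := inter_subset_right
      have hsub : f (H ∩ Q) ⊆ I \ Q := by
        intro x hx
        rw [mem_sdiff]
        refine ⟨hf1 _ hAQ hx, fun hxQ => ?_⟩
        have : x ∈ f (H ∩ Q) ∩ Q := mem_inter.mpr ⟨hx, hxQ⟩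
        rw [hf2 _ hAQ] at this
        exact absurd this (notMem_empty x)
      rw [hne] at hsub
      have : f (H ∩ Q) = ∅ := Finset.subset_empty.mp hsub
      rw [this, Finset.empty_inter, Finset.card_empty, Nat.cast_zero]
    rw [Finset.sum_congr rfl hzero, Finset.sum_const_zero, zero_div]
    positivity
end

section
/- Let N, B, k be natural numbers with 1 ≤ B ≤ N and k ≤ N, let Q be a fixed subset of {1,…,N} with |Q| = k, and let H be a uniformly random B-element subset of {1,…,N}. Let f be any function assigning to each possible query outcome A ⊆ Q a selected token subset f(A) ⊆ {1,…,N} with |f(A)| ≤ B for all A. Then the expected total retained value satisfies E[|f(H ∩ Q) ∩ H|] ≤ (k + B)·B/N. -/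
open Finset

lemma count_mem_le (s : Finset ℕ) (a m : ℕ) (ha : a ∈ s) :
    ({H ∈ s.powersetCard m | a ∈ H}).card ≤ (s.card - 1).choose (m - 1) := by
  rw [← Finset.card_erase_of_mem ha, ← Finset.card_powersetCard]
  apply Finset.card_le_card_of_injOn (fun H => H.erase a)
  · intro H hH
    simp only [Finset.mem_coe, Finset.mem_filter, Finset.mem_powersetCard] at hH
    obtain ⟨⟨hs, hc⟩, haH⟩ := hH
    rw [Finset.mem_coe, Finset.mem_powersetCard]
    exact ⟨Finset.erase_subset_erase a hs, by rw [Finset.card_erase_of_mem haH, hc]⟩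
  · intro H1 h1 H2 h2 he
    simp only [Finset.coe_filter, Set.mem_setOf_eq] at h1 h2
    rw [← Finset.insert_erase h1.2, ← Finset.insert_erase h2.2]
    simp only at he
    rw [he]

lemma sum_inter_card_le (s T : Finset ℕ) (m : ℕ) (hT : T ⊆ s) :
    ∑ H ∈ s.powersetCard m, (T ∩ H).card ≤ T.card * (s.card - 1).choose (m - 1) := by
  calc ∑ H ∈ s.powersetCard m, (T ∩ H).card
      = ∑ H ∈ s.powersetCard m, ∑ x ∈ T, ite (x ∈ H) 1 0 := by
        refine Finset.sum_congr rfl fun H _ => ?_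
        rw [← Finset.filter_mem_eq_inter]
        exact Finset.card_filter _ T
    _ = ∑ x ∈ T, ({H ∈ s.powersetCard m | x ∈ H}).card := by
        rw [Finset.sum_comm]
        exact Finset.sum_congr rfl fun x _ => (Finset.card_filter _ _).symm
    _ ≤ ∑ _x ∈ T, (s.card - 1).choose (m - 1) :=
        Finset.sum_le_sum fun x hx => count_mem_le s x m (hT hx)
    _ = T.card * (s.card - 1).choose (m - 1) := by rw [Finset.sum_const, smul_eq_mul]

lemma fiber_sum_eq (I Q A T : Finset ℕ) (B : ℕ) (hQI : Q ⊆ I) (hA : A ⊆ Q)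
    (hT : T ⊆ I \ Q) (haB : A.card ≤ B) :
    ∑ H ∈ (I.powersetCard B).filter (fun H => H ∩ Q = A), (T ∩ H).card
      = ∑ H' ∈ (I \ Q).powersetCard (B - A.card), (T ∩ H').card := by
  refine Finset.sum_nbij' (fun H => H \ Q) (fun H' => A ∪ H') ?_ ?_ ?_ ?_ ?_
  · intro H hH
    simp only [Finset.mem_filter, Finset.mem_powersetCard] at hH ⊢
    obtain ⟨⟨hHI, hHc⟩, hHQ⟩ := hH
    refine ⟨Finset.sdiff_subset_sdiff hHI (by rfl), ?_⟩
    have h2 := Finset.card_inter_add_card_sdiff H Q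
    rw [hHQ] at h2; omega
  · intro H' hH'
    simp only [Finset.mem_powersetCard] at hH'
    obtain ⟨hH'I, hH'c⟩ := hH'
    have hdisj : Disjoint H' Q := by
      refine Finset.disjoint_left.2 fun x hx hxQ => (Finset.mem_sdiff.1 (hH'I hx)).2 hxQ
    have hdisjA : Disjoint A H' := by
      refine Finset.disjoint_left.2 fun x hxA hxH' => (Finset.mem_sdiff.1 (hH'I hxH')).2 (hA hxA)
    simp only [Finset.mem_filter, Finset.mem_powersetCard]
    refine ⟨⟨Finset.union_subset (hA.trans hQI) (hH'I.trans Finset.sdiff_subset), ?_⟩, ?_⟩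
    · rw [Finset.card_union_of_disjoint hdisjA, hH'c]
      have := Finset.card_le_card (hA.trans hQI)
      omega
    · rw [Finset.union_inter_distrib_right, Finset.inter_eq_left.2 hA,
        Finset.disjoint_iff_inter_eq_empty.1 hdisj, Finset.union_empty]
  · intro H hH
    simp only [Finset.mem_filter, Finset.mem_powersetCard] at hH
    obtain ⟨_, hHQ⟩ := hH
    subst hHQ
    ext x
    simp only [Finset.mem_union, Finset.mem_inter, Finset.mem_sdiff]
    tauto
  · intro H' hH'
    simp only [Finset.mem_powersetCard] at hH'
    obtain ⟨hH'I, _⟩ := hH'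
    ext x
    simp only [Finset.mem_sdiff, Finset.mem_union]
    constructor
    · rintro ⟨hx | hx, hxQ⟩
      · exact absurd (hA hx) hxQ
      · exact hx
    · intro hx
      exact ⟨Or.inr hx, (Finset.mem_sdiff.1 (hH'I hx)).2⟩
  · intro H hH
    congr 1
    ext x
    simp only [Finset.mem_inter, Finset.mem_sdiff]
    exact ⟨fun ⟨hxT, hxH⟩ => ⟨hxT, hxH, (Finset.mem_sdiff.1 (hT hxT)).2⟩,
      fun ⟨hxT, hxH, _⟩ => ⟨hxT, hxH⟩⟩

lemma vander_le (N B k : ℕ) (hB1 : 1 ≤ B) (hkN : k + 1 ≤ N) :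
    ∑ m ∈ Finset.range (k + 1),
        k.choose m * (if m < B then (N - k - 1).choose (B - m - 1) else 0)
      ≤ (N - 1).choose (B - 1) := by
  have h1 : (N - 1) = k + (N - 1 - k) := by omega
  rw [h1, Nat.add_choose_eq, Finset.Nat.sum_antidiagonal_eq_sum_range_succ_mk]
  have hB : B - 1 + 1 = B := by omega
  rw [Nat.succ_eq_add_one, hB]; simp only []
  calc ∑ m ∈ Finset.range (k + 1),
        k.choose m * (if m < B then (N - k - 1).choose (B - m - 1) else 0)
      = ∑ m ∈ Finset.range (k + 1),
          (if m < B then k.choose m * (N - k - 1).choose (B - m - 1) else 0) := by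
        simp [mul_ite]
    _ = ∑ m ∈ (Finset.range (k + 1)).filter (fun m => m < B),
          k.choose m * (N - k - 1).choose (B - m - 1) := (Finset.sum_filter _ _).symm
    _ ≤ ∑ m ∈ Finset.range B, k.choose m * (N - k - 1).choose (B - m - 1) := by
        refine Finset.sum_le_sum_of_subset fun m hm => ?_
        simp only [Finset.mem_filter, Finset.mem_range] at hm ⊢
        exact hm.2
    _ = ∑ m ∈ Finset.range B, k.choose m * (N - 1 - k).choose (B - 1 - m) := by
        refine Finset.sum_congr rfl fun m _ => ?_
        rw [Nat.sub_right_comm N k 1, Nat.sub_right_comm B m 1]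

/-- If `H` is a uniformly random `B`-element subset of `{1,…,N}`, `Q` a fixed query set of
size `k`, and `f` any selection rule assigning to each possible query outcome `A ⊆ Q` a
subset `f A ⊆ {1,…,N}` with `|f A| ≤ B`, then the expected total retained value satisfies
`E[|f(H ∩ Q) ∩ H|] ≤ (k + B)·B/N`. -/
theorem stmt_5 (N B k : ℕ) (hB1 : 1 ≤ B) (hBN : B ≤ N) (hk : k ≤ N)
    (Q : Finset ℕ) (hQ : Q ⊆ Finset.Icc 1 N) (hQk : Q.card = k)
    (f : Finset ℕ → Finset ℕ)
    (hf1 : ∀ A ⊆ Q, f A ⊆ Finset.Icc 1 N)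
    (hf2 : ∀ A ⊆ Q, (f A).card ≤ B) :
    (∑ H ∈ (Finset.Icc 1 N).powersetCard B, ((f (H ∩ Q) ∩ H).card : ℝ))
        / (N.choose B : ℝ)
      ≤ ((k : ℝ) + B) * B / N := by
  set I := Finset.Icc 1 N with hI
  have hIcard : I.card = N := by simp [hI]
  have hC0 : 0 < N.choose B := Nat.choose_pos hBN
  have hC0R : (0 : ℝ) < (N.choose B : ℝ) := by exact_mod_cast hC0
  have hNR : (0 : ℝ) < (N : ℝ) := by
    have : 0 < N := by omega
    exact_mod_cast this
  have hcast : (∑ H ∈ I.powersetCard B, ((f (H ∩ Q) ∩ H).card : ℝ))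
      = ((∑ H ∈ I.powersetCard B, (f (H ∩ Q) ∩ H).card : ℕ) : ℝ) := by
    push_cast; ring
  by_cases hkN : k = N
  · -- all tokens queried: trivial bound by B
    have hsum : ∑ H ∈ I.powersetCard B, (f (H ∩ Q) ∩ H).card ≤ N.choose B * B := by
      calc ∑ H ∈ I.powersetCard B, (f (H ∩ Q) ∩ H).card
          ≤ ∑ _H ∈ I.powersetCard B, B :=
            Finset.sum_le_sum fun H _ =>
              le_trans (Finset.card_le_card Finset.inter_subset_left)
                (hf2 _ Finset.inter_subset_right)
        _ = N.choose B * B := by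
            rw [Finset.sum_const, smul_eq_mul, Finset.card_powersetCard, hIcard]
    rw [hcast, div_le_div_iff₀ hC0R hNR]
    have hsR : ((∑ H ∈ I.powersetCard B, (f (H ∩ Q) ∩ H).card : ℕ) : ℝ)
        ≤ (N.choose B : ℝ) * B := by exact_mod_cast hsum
    have hkR : (k : ℝ) = N := by exact_mod_cast hkN
    nlinarith [sq_nonneg ((B : ℝ)), hC0R.le, hNR.le, mul_nonneg hC0R.le (by positivity : (0:ℝ) ≤ (B:ℝ))]
  · -- k < N
    have hkN' : k + 1 ≤ N := by omega
    set C1 := (N - 1).choose (B - 1) with hC1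
    have key : ∑ H ∈ I.powersetCard B, (f (H ∩ Q) ∩ H).card ≤ (k + B) * C1 := by
      have step1 : ∀ H : Finset ℕ,
          (f (H ∩ Q) ∩ H).card ≤ (Q ∩ H).card + ((f (H ∩ Q) \ Q) ∩ H).card := by
        intro H
        refine le_trans (Finset.card_le_card ?_) (Finset.card_union_le _ _)
        intro x hx
        simp only [Finset.mem_inter, Finset.mem_union, Finset.mem_sdiff] at hx ⊢
        by_cases hxQ : x ∈ Q
        · exact Or.inl ⟨hxQ, hx.2⟩
        · exact Or.inr ⟨⟨hx.1, hxQ⟩, hx.2⟩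
      have stepB : ∑ H ∈ I.powersetCard B, (Q ∩ H).card ≤ k * C1 := by
        have := sum_inter_card_le I Q B hQ
        rwa [hIcard, hQk] at this
      have stepC : ∑ H ∈ I.powersetCard B, ((f (H ∩ Q) \ Q) ∩ H).card ≤ B * C1 := by
        rw [← Finset.sum_fiberwise_of_maps_to
          (g := fun H => H ∩ Q) (t := Q.powerset)
          (fun H _ => Finset.mem_powerset.2 Finset.inter_subset_right)
          (fun H => ((f (H ∩ Q) \ Q) ∩ H).card)]
        have fiberbound : ∀ A ∈ Q.powerset,
            ∑ H ∈ (I.powersetCard B).filter (fun H => H ∩ Q = A),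
              ((f (H ∩ Q) \ Q) ∩ H).card
            ≤ B * (if A.card < B then (N - k - 1).choose (B - A.card - 1) else 0) := by
          intro A hA
          rw [Finset.mem_powerset] at hA
          have hcongr : ∑ H ∈ (I.powersetCard B).filter (fun H => H ∩ Q = A),
              ((f (H ∩ Q) \ Q) ∩ H).card
              = ∑ H ∈ (I.powersetCard B).filter (fun H => H ∩ Q = A),
                ((f A \ Q) ∩ H).card := by
            refine Finset.sum_congr rfl fun H hH => ?_
            rw [(Finset.mem_filter.1 hH).2]
          rw [hcongr]
          by_cases hlt : A.card < B
          · rw [if_pos hlt]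
            have hTsub : f A \ Q ⊆ I \ Q := Finset.sdiff_subset_sdiff (hf1 A hA) (by rfl)
            rw [fiber_sum_eq I Q A (f A \ Q) B hQ hA hTsub (le_of_lt hlt)]
            refine le_trans (sum_inter_card_le (I \ Q) (f A \ Q) (B - A.card) hTsub) ?_
            have hc : (I \ Q).card = N - k := by rw [Finset.card_sdiff_of_subset hQ, hIcard, hQk]
            rw [hc]
            exact Nat.mul_le_mul_right _
              (le_trans (Finset.card_le_card Finset.sdiff_subset) (hf2 A hA))
          · rw [if_neg hlt, Nat.mul_zero]
            refine le_of_eq (Finset.sum_eq_zero fun H hH => ?_)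
            simp only [Finset.mem_filter, Finset.mem_powersetCard] at hH
            obtain ⟨⟨hHI, hHc⟩, hHQ⟩ := hH
            have hAH : A ⊆ H := hHQ ▸ Finset.inter_subset_left
            have hAeq : A = H := Finset.eq_of_subset_of_card_le hAH (by omega)
            have hHsubQ : H ⊆ Q := hAeq ▸ hA
            rw [Finset.card_eq_zero]
            refine Finset.eq_empty_of_forall_notMem fun x hx => ?_
            simp only [Finset.mem_inter, Finset.mem_sdiff] at hx
            exact hx.1.2 (hHsubQ hx.2)
        calc ∑ A ∈ Q.powerset, ∑ H ∈ (I.powersetCard B).filter (fun H => H ∩ Q = A),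
              ((f (H ∩ Q) \ Q) ∩ H).card
            ≤ ∑ A ∈ Q.powerset,
              B * (if A.card < B then (N - k - 1).choose (B - A.card - 1) else 0) :=
              Finset.sum_le_sum fiberbound
          _ = ∑ m ∈ Finset.range (k + 1), k.choose m •
              (B * (if m < B then (N - k - 1).choose (B - m - 1) else 0)) := by
              rw [Finset.sum_powerset_apply_card
                (fun m => B * (if m < B then (N - k - 1).choose (B - m - 1) else 0)), hQk]
          _ = B * ∑ m ∈ Finset.range (k + 1),
              k.choose m * (if m < B then (N - k - 1).choose (B - m - 1) else 0) := by
              rw [Finset.mul_sum]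
              exact Finset.sum_congr rfl fun m _ => by rw [smul_eq_mul]; ring
          _ ≤ B * C1 := Nat.mul_le_mul_left _ (vander_le N B k hB1 hkN')
      calc ∑ H ∈ I.powersetCard B, (f (H ∩ Q) ∩ H).card
          ≤ ∑ H ∈ I.powersetCard B, ((Q ∩ H).card + ((f (H ∩ Q) \ Q) ∩ H).card) :=
            Finset.sum_le_sum fun H _ => step1 H
        _ = (∑ H ∈ I.powersetCard B, (Q ∩ H).card)
            + ∑ H ∈ I.powersetCard B, ((f (H ∩ Q) \ Q) ∩ H).card := Finset.sum_add_distrib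
        _ ≤ k * C1 + B * C1 := Nat.add_le_add stepB stepC
        _ = (k + B) * C1 := by ring
    have hNC1 : N * C1 = N.choose B * B := by
      have h := Nat.add_one_mul_choose_eq (N - 1) (B - 1)
      have h1 : N - 1 + 1 = N := by omega
      have h2 : B - 1 + 1 = B := by omega
      simpa [Nat.succ_eq_add_one, h1, h2, hC1] using h
    rw [hcast, div_le_div_iff₀ hC0R hNR]
    have keyR : ((∑ H ∈ I.powersetCard B, (f (H ∩ Q) ∩ H).card : ℕ) : ℝ)
        ≤ ((k : ℝ) + B) * C1 := by exact_mod_cast key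
    have hNC1R : (N : ℝ) * C1 = (N.choose B : ℝ) * B := by exact_mod_cast hNC1
    have hkB : (0 : ℝ) ≤ (k : ℝ) + B := by positivity
    nlinarith [keyR, hNC1R, hNR.le, mul_le_mul_of_nonneg_right keyR hNR.le]
end

section
/- Let N, B, k be natural numbers with 1 ≤ B ≤ N and k ≤ N, let Q be a fixed subset of {1,…,N} with |Q| = k, and let H be a uniformly random B-element subset of {1,…,N}. Let f be any function assigning to each possible query outcome A ⊆ Q a selected token subset f(A) ⊆ {1,…,N} with |f(A)| ≤ B for all A. Then the expected regret of the policy against the offline optimum (which retains all of H for value B) satisfies E[B − |f(H ∩ Q) ∩ H|] ≥ B·(1 − (k + B)/N). -/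
open Finset

/-- Number of `r`-subsets of `M` containing a fixed element `j ∈ M`. -/
lemma countD (M : Finset ℕ) (j : ℕ) (hj : j ∈ M) (r : ℕ) (hr : 1 ≤ r) :
    ((M.powersetCard r).filter (fun R => j ∈ R)).card = (M.card - 1).choose (r - 1) := by
  have h : ((M.powersetCard r).filter (fun R => j ∈ R)).card
      = ((M.erase j).powersetCard (r - 1)).card := by
    apply Finset.card_bij' (fun R _ => R.erase j) (fun R' _ => insert j R')
    · intro R hR
      simp only [mem_filter] at hR
      exact insert_erase hR.2
    · intro R' hR'
      rw [mem_powersetCard] at hR'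
      have hjR' : j ∉ R' := fun h => (mem_erase.1 (hR'.1 h)).1 rfl
      exact erase_insert hjR'
    · intro R hR
      simp only [mem_filter, mem_powersetCard] at hR
      obtain ⟨⟨hRM, hRc⟩, hjR⟩ := hR
      rw [mem_powersetCard]
      exact ⟨erase_subset_erase j hRM, by rw [card_erase_of_mem hjR, hRc]⟩
    · intro R' hR'
      rw [mem_powersetCard] at hR'
      obtain ⟨hR'M, hR'c⟩ := hR'
      have hjR' : j ∉ R' := fun h => (mem_erase.1 (hR'M h)).1 rfl
      simp only [mem_filter, mem_powersetCard]
      refine ⟨⟨?_, ?_⟩, mem_insert_self j R'⟩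
      · intro x hx
        rcases mem_insert.1 hx with h | h
        · exact h ▸ hj
        · exact (erase_subset j M) (hR'M h)
      · rw [card_insert_of_notMem hjR', hR'c]
        omega
  rw [h, card_powersetCard, card_erase_of_mem hj]

/-- Sum over all `r`-subsets `R` of `M` of `|W ∩ R|`, for `W ⊆ M`. -/
lemma sumC (M W : Finset ℕ) (hW : W ⊆ M) (r : ℕ) (hr : 1 ≤ r) :
    ∑ R ∈ M.powersetCard r, (W ∩ R).card = W.card * (M.card - 1).choose (r - 1) := by
  have h1 : ∀ R : Finset ℕ, (W ∩ R).card = ∑ j ∈ W, if j ∈ R then 1 else 0 := by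
    intro R
    rw [← Finset.card_filter, filter_mem_eq_inter]
  calc ∑ R ∈ M.powersetCard r, (W ∩ R).card
      = ∑ R ∈ M.powersetCard r, ∑ j ∈ W, if j ∈ R then 1 else 0 := by
        exact Finset.sum_congr rfl fun R _ => h1 R
    _ = ∑ j ∈ W, ∑ R ∈ M.powersetCard r, if j ∈ R then 1 else 0 := Finset.sum_comm
    _ = ∑ j ∈ W, ((M.powersetCard r).filter (fun R => j ∈ R)).card := by
        exact Finset.sum_congr rfl fun j _ => (Finset.card_filter _ _).symm
    _ = ∑ j ∈ W, (M.card - 1).choose (r - 1) := by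
        exact Finset.sum_congr rfl fun j hj => countD M j (hW hj) r hr
    _ = W.card * (M.card - 1).choose (r - 1) := by
        rw [Finset.sum_const, smul_eq_mul]

/-- Vandermonde-type inequality. -/
lemma vdm (K m t : ℕ) :
    ∑ a ∈ Finset.range (K + 1), (if a ≤ t then K.choose a * m.choose (t - a) else 0)
      ≤ (K + m).choose t := by
  calc ∑ a ∈ Finset.range (K + 1), (if a ≤ t then K.choose a * m.choose (t - a) else 0)
      = ∑ a ∈ (Finset.range (K + 1)).filter (fun a => a ≤ t),
          K.choose a * m.choose (t - a) := (Finset.sum_filter _ _).symm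
    _ ≤ ∑ a ∈ Finset.range (t + 1), K.choose a * m.choose (t - a) := by
        apply Finset.sum_le_sum_of_subset
        intro a ha
        simp only [mem_filter, mem_range] at ha ⊢
        omega
    _ = (K + m).choose t := by
        rw [Nat.add_choose_eq, Finset.Nat.sum_antidiagonal_eq_sum_range_succ_mk]

lemma mainNat (N B k : ℕ) (hB1 : 1 ≤ B) (hBN : B ≤ N) (hk : k ≤ N)
    (Q : Finset ℕ) (hQ : Q ⊆ Finset.Icc 1 N) (hQk : Q.card = k)
    (f : Finset ℕ → Finset ℕ)
    (hf1 : ∀ A ⊆ Q, f A ⊆ Finset.Icc 1 N)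
    (hf2 : ∀ A ⊆ Q, (f A).card ≤ B) :
    ∑ H ∈ (Finset.Icc 1 N).powersetCard B, (f (H ∩ Q) ∩ H).card
      ≤ (k + B) * (N - 1).choose (B - 1) := by
  set S : Finset ℕ := Finset.Icc 1 N with hS
  have hScard : S.card = N := by rw [hS, Nat.card_Icc]; omega
  -- Step 1 : pointwise split
  have step1 : ∀ H ∈ S.powersetCard B,
      (f (H ∩ Q) ∩ H).card ≤ (H ∩ Q).card + ((f (H ∩ Q) ∩ H) \ Q).card := by
    intro H _
    calc (f (H ∩ Q) ∩ H).card
        ≤ ((H ∩ Q) ∪ ((f (H ∩ Q) ∩ H) \ Q)).card := by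
          apply card_le_card
          intro x hx
          simp only [mem_inter] at hx
          by_cases hxQ : x ∈ Q
          · exact mem_union_left _ (mem_inter.2 ⟨hx.2, hxQ⟩)
          · exact mem_union_right _ (mem_sdiff.2 ⟨mem_inter.2 hx, hxQ⟩)
      _ ≤ (H ∩ Q).card + ((f (H ∩ Q) ∩ H) \ Q).card := card_union_le _ _
  -- Claim 1
  have claim1 : ∑ H ∈ S.powersetCard B, (H ∩ Q).card = k * (N - 1).choose (B - 1) := by
    have h1 : ∀ H : Finset ℕ, (H ∩ Q).card = (Q ∩ H).card := fun H => by rw [inter_comm]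
    calc ∑ H ∈ S.powersetCard B, (H ∩ Q).card
        = ∑ H ∈ S.powersetCard B, (Q ∩ H).card := Finset.sum_congr rfl fun H _ => h1 H
      _ = Q.card * (S.card - 1).choose (B - 1) := sumC S Q hQ B hB1
      _ = k * (N - 1).choose (B - 1) := by rw [hQk, hScard]
  -- Claim 2
  have claim2 : ∑ H ∈ S.powersetCard B, ((f (H ∩ Q) ∩ H) \ Q).card
      ≤ B * (N - 1).choose (B - 1) := by
    rcases eq_or_lt_of_le hk with hkN | hkN
    · -- k = N : Q = S and everything lies in Q
      have hQS : Q = S := Finset.eq_of_subset_of_card_le hQ (by rw [hScard, hQk, ← hkN])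
      have hz : ∀ H ∈ S.powersetCard B, ((f (H ∩ Q) ∩ H) \ Q).card = 0 := by
        intro H _
        rw [Finset.card_eq_zero, Finset.sdiff_eq_empty_iff_subset]
        intro x hx
        rw [hQS]
        exact hf1 (H ∩ Q) inter_subset_right ((mem_inter.1 hx).1)
      rw [Finset.sum_congr rfl hz]
      simp
    · -- k < N
      set M : Finset ℕ := S \ Q with hMdef
      have hM : M.card = N - k := by rw [hMdef, card_sdiff_of_subset hQ, hScard, hQk]
      set F : ℕ → ℕ := fun a => if a < B then (N - k - 1).choose (B - 1 - a) else 0 with hF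
      set D := (Q.powerset.filter (fun A => A.card ≤ B)).sigma
          (fun A => M.powersetCard (B - A.card)) with hD
      have hre : ∑ H ∈ S.powersetCard B, ((f (H ∩ Q) ∩ H) \ Q).card
          = ∑ x ∈ D, ((f x.1 ∩ (x.1 ∪ x.2)) \ Q).card := by
        apply Finset.sum_nbij' (i := fun H => (⟨H ∩ Q, H \ Q⟩ : (_ : Finset ℕ) × Finset ℕ))
          (j := fun x => x.1 ∪ x.2)
        · intro H hH
          rw [mem_powersetCard] at hH
          obtain ⟨hHS, hHc⟩ := hH
          rw [hD, Finset.mem_sigma]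
          constructor
          · rw [mem_filter, mem_powerset]
            exact ⟨inter_subset_right, by
              calc (H ∩ Q).card ≤ H.card := card_le_card inter_subset_left
                _ = B := hHc⟩
          · rw [mem_powersetCard]
            refine ⟨sdiff_subset_sdiff hHS subset_rfl, ?_⟩
            have h4 := Finset.card_sdiff_add_card_inter H Q
            dsimp only
            omega
        · rintro ⟨A, R⟩ hx
          rw [hD, Finset.mem_sigma, mem_filter, mem_powerset, mem_powersetCard] at hx
          obtain ⟨⟨hAQ, hAB⟩, hRM, hRc⟩ := hx
          rw [mem_powersetCard]
          constructor
          · apply union_subset (hAQ.trans hQ) (hRM.trans sdiff_subset)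
          · have hdisj : Disjoint A R := by
              apply Finset.disjoint_left.2
              intro x hxA hxR
              exact (mem_sdiff.1 (hRM hxR)).2 (hAQ hxA)
            dsimp only at hAB hRc ⊢
            rw [card_union_of_disjoint hdisj, hRc]
            omega
        · intro H hH
          simp only []
          ext x
          simp only [mem_union, mem_inter, mem_sdiff]
          tauto
        · rintro ⟨A, R⟩ hx
          rw [hD, Finset.mem_sigma, mem_filter, mem_powerset, mem_powersetCard] at hx
          obtain ⟨⟨hAQ, hAB⟩, hRM, hRc⟩ := hx
          have h1 : (A ∪ R) ∩ Q = A := by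
            ext x
            simp only [mem_inter, mem_union]
            constructor
            · rintro ⟨hx1 | hx1, hx2⟩
              · exact hx1
              · exact absurd hx2 (mem_sdiff.1 (hRM hx1)).2
            · intro hx
              exact ⟨Or.inl hx, hAQ hx⟩
          have h2 : (A ∪ R) \ Q = R := by
            ext x
            simp only [mem_sdiff, mem_union]
            constructor
            · rintro ⟨hx1 | hx1, hx2⟩
              · exact absurd (hAQ hx1) hx2
              · exact hx1
            · intro hx
              exact ⟨Or.inr hx, (mem_sdiff.1 (hRM hx)).2⟩
          simp only [h1, h2]
        · intro H hH
          have h3 : (H ∩ Q) ∪ (H \ Q) = H := by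
            ext x
            simp only [mem_union, mem_inter, mem_sdiff]
            tauto
          simp only [h3]
      rw [hre, hD, Finset.sum_sigma]
      have inner : ∀ A ∈ Q.powerset.filter (fun A => A.card ≤ B),
          ∑ R ∈ M.powersetCard (B - A.card), ((f A ∩ (A ∪ R)) \ Q).card ≤ B * F A.card := by
        intro A hA
        rw [mem_filter, mem_powerset] at hA
        obtain ⟨hAQ, hAB⟩ := hA
        by_cases hAlt : A.card < B
        · have hsub : ∀ R : Finset ℕ, (f A ∩ (A ∪ R)) \ Q ⊆ (f A \ Q) ∩ R := by
            intro R x hx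
            rw [mem_sdiff, mem_inter, mem_union] at hx
            obtain ⟨⟨hxf, hxAR⟩, hxQ⟩ := hx
            rcases hxAR with h | h
            · exact absurd (hAQ h) hxQ
            · exact mem_inter.2 ⟨mem_sdiff.2 ⟨hxf, hxQ⟩, h⟩
          calc ∑ R ∈ M.powersetCard (B - A.card), ((f A ∩ (A ∪ R)) \ Q).card
              ≤ ∑ R ∈ M.powersetCard (B - A.card), ((f A \ Q) ∩ R).card :=
                Finset.sum_le_sum fun R _ => card_le_card (hsub R)
            _ = (f A \ Q).card * (M.card - 1).choose (B - A.card - 1) := by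
                apply sumC
                · intro x hx
                  rw [mem_sdiff] at hx ⊢
                  exact ⟨hf1 A hAQ hx.1, hx.2⟩
                · omega
            _ ≤ B * F A.card := by
                have e1 : M.card - 1 = N - k - 1 := by rw [hM]
                have e2 : B - A.card - 1 = B - 1 - A.card := by omega
                have e3 : F A.card = (N - k - 1).choose (B - 1 - A.card) := by
                  rw [hF]; simp [hAlt]
                rw [e1, e2, e3]
                apply Nat.mul_le_mul_right
                calc (f A \ Q).card ≤ (f A).card := card_le_card sdiff_subset
                  _ ≤ B := hf2 A hAQ
        · have hAB' : B - A.card = 0 := by omega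
          rw [hAB', Finset.powersetCard_zero, Finset.sum_singleton]
          have : (f A ∩ (A ∪ ∅)) \ Q = ∅ := by
            rw [Finset.sdiff_eq_empty_iff_subset]
            intro x hx
            rw [union_empty, mem_inter] at hx
            exact hAQ hx.2
          rw [this]
          simp
      calc ∑ A ∈ Q.powerset.filter (fun A => A.card ≤ B),
            ∑ R ∈ M.powersetCard (B - A.card), ((f A ∩ (A ∪ R)) \ Q).card
          ≤ ∑ A ∈ Q.powerset.filter (fun A => A.card ≤ B), B * F A.card :=
            Finset.sum_le_sum inner
        _ ≤ ∑ A ∈ Q.powerset, B * F A.card :=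
            Finset.sum_le_sum_of_subset (Finset.filter_subset _ _)
        _ = B * ∑ A ∈ Q.powerset, F A.card := by rw [Finset.mul_sum]
        _ ≤ B * (N - 1).choose (B - 1) := by
            apply Nat.mul_le_mul_left
            rw [Finset.sum_powerset_apply_card F, hQk]
            have heq : ∀ m ∈ Finset.range (k + 1), k.choose m • F m
                = (if m ≤ B - 1 then k.choose m * (N - k - 1).choose (B - 1 - m) else 0) := by
              intro m _
              rw [smul_eq_mul]
              by_cases hm : m < B
              · simp only [hF, if_pos hm, if_pos (show m ≤ B - 1 by omega)]
              · simp only [hF, if_neg hm, if_neg (show ¬ m ≤ B - 1 by omega), mul_zero]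
            rw [Finset.sum_congr rfl heq]
            have := vdm k (N - k - 1) (B - 1)
            have hkk : k + (N - k - 1) = N - 1 := by omega
            rwa [hkk] at this
  calc ∑ H ∈ S.powersetCard B, (f (H ∩ Q) ∩ H).card
      ≤ ∑ H ∈ S.powersetCard B, ((H ∩ Q).card + ((f (H ∩ Q) ∩ H) \ Q).card) :=
        Finset.sum_le_sum step1
    _ = (∑ H ∈ S.powersetCard B, (H ∩ Q).card)
        + ∑ H ∈ S.powersetCard B, ((f (H ∩ Q) ∩ H) \ Q).card := Finset.sum_add_distrib
    _ ≤ k * (N - 1).choose (B - 1) + B * (N - 1).choose (B - 1) := by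
        rw [claim1]; exact Nat.add_le_add_left claim2 _
    _ = (k + B) * (N - 1).choose (B - 1) := by ring



/-- If `H` is a uniformly random `B`-element subset of `{1,…,N}`, `Q` a fixed query set of
size `k`, and `f` any selection rule assigning to each possible query outcome `A ⊆ Q` a
subset `f A ⊆ {1,…,N}` with `|f A| ≤ B`, then the expected regret against the offline
optimum (which retains all of `H` for value `B`) satisfies
`E[B − |f(H ∩ Q) ∩ H|] ≥ B·(1 − (k + B)/N)`. -/
theorem stmt_6 (N B k : ℕ) (hB1 : 1 ≤ B) (hBN : B ≤ N) (hk : k ≤ N)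
    (Q : Finset ℕ) (hQ : Q ⊆ Finset.Icc 1 N) (hQk : Q.card = k)
    (f : Finset ℕ → Finset ℕ)
    (hf1 : ∀ A ⊆ Q, f A ⊆ Finset.Icc 1 N)
    (hf2 : ∀ A ⊆ Q, (f A).card ≤ B) :
    (B : ℝ) * (1 - ((k : ℝ) + B) / N)
      ≤ (∑ H ∈ (Finset.Icc 1 N).powersetCard B,
            ((B : ℝ) - ((f (H ∩ Q) ∩ H).card : ℝ)))
          / (N.choose B : ℝ) := by
  have key := mainNat N B k hB1 hBN hk Q hQ hQk f hf1 hf2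
  have hNpos : 0 < N := le_trans hB1 hBN
  have hCpos : 0 < N.choose B := Nat.choose_pos hBN
  have hid : N * (N - 1).choose (B - 1) = N.choose B * B := by
    have h := Nat.add_one_mul_choose_eq (N - 1) (B - 1)
    have h1 : N - 1 + 1 = N := by omega
    have h2 : B - 1 + 1 = B := by omega
    rw [h1, h2] at h
    exact h
  have hcard : ((Finset.Icc 1 N).powersetCard B).card = N.choose B := by
    rw [Finset.card_powersetCard, Nat.card_Icc]
    congr 1
  have hCR : (0 : ℝ) < (N.choose B : ℝ) := by exact_mod_cast hCpos
  have hNR : (0 : ℝ) < (N : ℝ) := by exact_mod_cast hNpos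
  have hidR : (N : ℝ) * ((N - 1).choose (B - 1) : ℝ) = (N.choose B : ℝ) * B := by
    exact_mod_cast hid
  have hsum : ∑ H ∈ (Finset.Icc 1 N).powersetCard B,
      ((B : ℝ) - ((f (H ∩ Q) ∩ H).card : ℝ))
      = (N.choose B : ℝ) * B
        - ∑ H ∈ (Finset.Icc 1 N).powersetCard B, ((f (H ∩ Q) ∩ H).card : ℝ) := by
    rw [Finset.sum_sub_distrib, Finset.sum_const, hcard, nsmul_eq_mul]
  have hx : ∑ H ∈ (Finset.Icc 1 N).powersetCard B, ((f (H ∩ Q) ∩ H).card : ℝ)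
      ≤ ((k : ℝ) + B) * ((N - 1).choose (B - 1) : ℝ) := by
    exact_mod_cast key
  rw [le_div_iff₀ hCR, hsum]
  have eq3 : (B : ℝ) * (1 - ((k : ℝ) + B) / N) * (N.choose B : ℝ)
      = (N.choose B : ℝ) * B - ((k : ℝ) + B) * ((N - 1).choose (B - 1) : ℝ) := by
    have hN0 : (N : ℝ) ≠ 0 := ne_of_gt hNR
    field_simp
    try linear_combination ((k : ℝ) + B) * hidR
  rw [eq3]
  linarith [hx]
end

section
/- Let N, B, k be natural numbers with 1 ≤ B and 2·(k + B) ≤ N, let Q be a fixed subset of {1,…,N} with |Q| = k, and let H be a uniformly random B-element subset of {1,…,N}. Then for every function f assigning to each possible query outcome A ⊆ Q a selected token subset f(A) ⊆ {1,…,N} with |f(A)| ≤ B, the expected regret against the offline optimum satisfies E[B − |f(H ∩ Q) ∩ H|] ≥ B/2 ≥ 1/2; in particular the regret is bounded away from zero by a constant independent of N, so no such policy achieves sub-constant regret. -/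
open Finset

lemma aux_count_mem (S : Finset ℕ) (B : ℕ) (q : ℕ) (hq : q ∈ S) :
    ((S.powersetCard B).filter (fun H => q ∈ H)).card ≤ (S.card - 1).choose (B - 1) := by
  classical
  have h := Finset.card_le_card_of_injOn (fun H => H.erase q)
    (s := (S.powersetCard B).filter (fun H => q ∈ H))
    (t := (S.erase q).powersetCard (B - 1)) ?_ ?_
  · rwa [Finset.card_powersetCard, Finset.card_erase_of_mem hq] at h
  · intro H hH
    simp only [Finset.mem_coe] at hH ⊢
    simp only [mem_filter, mem_powersetCard] at hH
    obtain ⟨⟨hsub, hcard⟩, hqm⟩ := hH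
    rw [mem_powersetCard]
    exact ⟨Finset.erase_subset_erase _ hsub, by rw [Finset.card_erase_of_mem hqm, hcard]⟩
  · intro H1 h1 H2 h2 heq
    simp only [coe_filter, Set.mem_setOf_eq] at h1 h2
    simp only at heq
    have : insert q (H1.erase q) = insert q (H2.erase q) := by rw [heq]
    rwa [Finset.insert_erase h1.2, Finset.insert_erase h2.2] at this

/-- Count of `B`-subsets `H` of `S` with `H ∩ Q = A` and `j ∈ H`, for `j ∈ S \ Q`. -/
lemma aux_fiber_count (S Q A : Finset ℕ) (B : ℕ) (j : ℕ)
    (hQS : Q ⊆ S) (hj : j ∈ S) (hjQ : j ∉ Q) (hA : A.card + 1 ≤ B) :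
    ((S.powersetCard B).filter (fun H => H ∩ Q = A ∧ j ∈ H)).card
      ≤ (S.card - Q.card - 1).choose (B - A.card - 1) := by
  classical
  have h := Finset.card_le_card_of_injOn (fun H => (H \ Q).erase j)
    (s := (S.powersetCard B).filter (fun H => H ∩ Q = A ∧ j ∈ H))
    (t := ((S \ Q).erase j).powersetCard (B - A.card - 1)) ?_ ?_
  · rwa [Finset.card_powersetCard, Finset.card_erase_of_mem (by simp [hj, hjQ]),
      Finset.card_sdiff_of_subset hQS] at h
  · intro H hH
    simp only [Finset.mem_coe] at hH ⊢
    simp only [mem_filter, mem_powersetCard] at hH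
    obtain ⟨⟨hsub, hcard⟩, hHQ, hjH⟩ := hH
    rw [mem_powersetCard]
    constructor
    · exact Finset.erase_subset_erase _ (Finset.sdiff_subset_sdiff hsub le_rfl)
    · have hjHQ : j ∈ H \ Q := by simp [hjH, hjQ]
      rw [Finset.card_erase_of_mem hjHQ]
      have : (H ∩ Q).card + (H \ Q).card = H.card := Finset.card_inter_add_card_sdiff H Q
      rw [hHQ] at this
      omega
  · intro H1 h1 H2 h2 heq
    simp only [coe_filter, Set.mem_setOf_eq, mem_powersetCard] at h1 h2
    simp only at heq
    ext x
    by_cases hxQ : x ∈ Q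
    · constructor
      · intro hx
        have : x ∈ H2 ∩ Q := by rw [h2.2.1, ← h1.2.1]; exact Finset.mem_inter.2 ⟨hx, hxQ⟩
        exact (Finset.mem_inter.1 this).1
      · intro hx
        have : x ∈ H1 ∩ Q := by rw [h1.2.1, ← h2.2.1]; exact Finset.mem_inter.2 ⟨hx, hxQ⟩
        exact (Finset.mem_inter.1 this).1
    · by_cases hxj : x = j
      · subst hxj; simp [h1.2.2, h2.2.2]
      · have e1 : x ∈ H1 ↔ x ∈ (H1 \ Q).erase j := by simp [hxj, hxQ]
        have e2 : x ∈ H2 ↔ x ∈ (H2 \ Q).erase j := by simp [hxj, hxQ]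
        rw [e1, e2, heq]

lemma aux_sumA (S Q : Finset ℕ) (B : ℕ) (hQS : Q ⊆ S) :
    ∑ H ∈ S.powersetCard B, (H ∩ Q).card ≤ Q.card * (S.card - 1).choose (B - 1) := by
  classical
  have step : ∀ H : Finset ℕ, (H ∩ Q).card = ∑ q ∈ Q, if q ∈ H then 1 else 0 := by
    intro H
    rw [← Finset.card_filter]
    congr 1
    rw [Finset.inter_comm, Finset.filter_mem_eq_inter]
  calc ∑ H ∈ S.powersetCard B, (H ∩ Q).card
      = ∑ H ∈ S.powersetCard B, ∑ q ∈ Q, if q ∈ H then 1 else 0 := by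
        exact Finset.sum_congr rfl fun H _ => step H
    _ = ∑ q ∈ Q, ∑ H ∈ S.powersetCard B, if q ∈ H then 1 else 0 := Finset.sum_comm
    _ = ∑ q ∈ Q, ((S.powersetCard B).filter (fun H => q ∈ H)).card := by
        exact Finset.sum_congr rfl fun q _ => (Finset.card_filter _ _).symm
    _ ≤ ∑ q ∈ Q, (S.card - 1).choose (B - 1) :=
        Finset.sum_le_sum fun q hq => aux_count_mem S B q (hQS hq)
    _ = Q.card * (S.card - 1).choose (B - 1) := by rw [Finset.sum_const, smul_eq_mul]

lemma aux_fiber_sum (S Q A F : Finset ℕ) (B : ℕ)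
    (hQS : Q ⊆ S) (hAQ : A ⊆ Q) (hFS : F ⊆ S) (hFB : F.card ≤ B) :
    ∑ H ∈ (S.powersetCard B).filter (fun H => H ∩ Q = A), (F ∩ (H \ Q)).card
      ≤ B * (if A.card + 1 ≤ B then (S.card - Q.card - 1).choose (B - A.card - 1) else 0) := by
  classical
  by_cases hA : A.card + 1 ≤ B
  · rw [if_pos hA]
    have step : ∀ H : Finset ℕ, (F ∩ (H \ Q)).card = ∑ j ∈ F \ Q, if j ∈ H then 1 else 0 := by
      intro H
      rw [← Finset.card_filter]
      congr 1
      ext x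
      simp only [Finset.mem_inter, Finset.mem_sdiff, Finset.mem_filter]
      tauto
    calc ∑ H ∈ (S.powersetCard B).filter (fun H => H ∩ Q = A), (F ∩ (H \ Q)).card
        = ∑ H ∈ (S.powersetCard B).filter (fun H => H ∩ Q = A),
            ∑ j ∈ F \ Q, if j ∈ H then 1 else 0 :=
          Finset.sum_congr rfl fun H _ => step H
      _ = ∑ j ∈ F \ Q, ∑ H ∈ (S.powersetCard B).filter (fun H => H ∩ Q = A),
            if j ∈ H then 1 else 0 := Finset.sum_comm
      _ = ∑ j ∈ F \ Q,
            (((S.powersetCard B).filter (fun H => H ∩ Q = A)).filter (fun H => j ∈ H)).card := by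
          exact Finset.sum_congr rfl fun j _ => (Finset.card_filter _ _).symm
      _ ≤ ∑ j ∈ F \ Q, (S.card - Q.card - 1).choose (B - A.card - 1) := by
          refine Finset.sum_le_sum fun j hj => ?_
          rw [Finset.filter_filter]
          have hjm := Finset.mem_sdiff.1 hj
          exact aux_fiber_count S Q A B j hQS (hFS hjm.1) hjm.2 hA
      _ = (F \ Q).card * (S.card - Q.card - 1).choose (B - A.card - 1) := by
          rw [Finset.sum_const, smul_eq_mul]
      _ ≤ B * (S.card - Q.card - 1).choose (B - A.card - 1) := by
          refine Nat.mul_le_mul_right _ ?_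
          exact le_trans (Finset.card_le_card (Finset.sdiff_subset)) hFB
  · rw [if_neg hA, Nat.mul_zero]
    rw [Finset.sum_eq_zero]
    intro H hH
    simp only [Finset.mem_filter, Finset.mem_powersetCard] at hH
    obtain ⟨⟨hsub, hcard⟩, hHQ⟩ := hH
    have hAH : A ⊆ H := hHQ ▸ Finset.inter_subset_left
    have : H = A := (Finset.eq_of_subset_of_card_le hAH (by omega)).symm
    have hHQ2 : H \ Q = ∅ := by
      rw [this, Finset.sdiff_eq_empty_iff_subset]
      exact hAQ
    rw [hHQ2, Finset.inter_empty, Finset.card_empty]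

lemma aux_vandermonde (N k B : ℕ) (hk : k + 1 ≤ N) (hB : 1 ≤ B) :
    ∑ a ∈ Finset.range (k + 1),
        k.choose a * (if a + 1 ≤ B then (N - k - 1).choose (B - a - 1) else 0)
      ≤ (N - 1).choose (B - 1) := by
  classical
  have hNk : k + (N - k - 1) = N - 1 := by omega
  have hv : (N - 1).choose (B - 1)
      = ∑ i ∈ Finset.range B, k.choose i * (N - k - 1).choose (B - 1 - i) := by
    rw [← hNk, Nat.add_choose_eq,
      Finset.Nat.sum_antidiagonal_eq_sum_range_succ
        (fun i j => k.choose i * (N - k - 1).choose j)]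
    have hB1 : (B - 1).succ = B := by omega
    rw [hB1]
  rw [hv]
  have hL : ∑ a ∈ Finset.range (k + 1),
      k.choose a * (if a + 1 ≤ B then (N - k - 1).choose (B - a - 1) else 0)
      = ∑ a ∈ (Finset.range (k + 1)).filter (fun a => a + 1 ≤ B),
          k.choose a * (N - k - 1).choose (B - 1 - a) := by
    rw [Finset.sum_filter]
    refine Finset.sum_congr rfl fun a _ => ?_
    by_cases h : a + 1 ≤ B
    · have hsub : B - a - 1 = B - 1 - a := by omega
      rw [if_pos h, if_pos h, hsub]
    · rw [if_neg h, if_neg h, Nat.mul_zero]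
  rw [hL]
  refine Finset.sum_le_sum_of_subset ?_
  intro a ha
  simp only [Finset.mem_filter, Finset.mem_range] at ha ⊢
  omega

lemma aux_key (N B k : ℕ) (hB1 : 1 ≤ B) (hN : 2 * (k + B) ≤ N)
    (Q : Finset ℕ) (hQ : Q ⊆ Finset.Icc 1 N) (hQk : Q.card = k)
    (f : Finset ℕ → Finset ℕ)
    (hf1 : ∀ A ⊆ Q, f A ⊆ Finset.Icc 1 N)
    (hf2 : ∀ A ⊆ Q, (f A).card ≤ B) :
    ∑ H ∈ (Finset.Icc 1 N).powersetCard B, (f (H ∩ Q) ∩ H).card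
      ≤ (k + B) * (N - 1).choose (B - 1) := by
  classical
  set S := Finset.Icc 1 N with hSdef
  have hS : S.card = N := by simp [hSdef]
  have pointwise : ∀ H : Finset ℕ,
      (f (H ∩ Q) ∩ H).card ≤ (H ∩ Q).card + (f (H ∩ Q) ∩ (H \ Q)).card := by
    intro H
    have hsub : f (H ∩ Q) ∩ H ⊆ (H ∩ Q) ∪ (f (H ∩ Q) ∩ (H \ Q)) := by
      intro x hx
      simp only [Finset.mem_inter, Finset.mem_union, Finset.mem_sdiff] at hx ⊢
      by_cases hxQ : x ∈ Q <;> tauto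
    exact le_trans (Finset.card_le_card hsub) (Finset.card_union_le _ _)
  have hsplit : ∑ H ∈ S.powersetCard B, (f (H ∩ Q) ∩ H).card
      ≤ (∑ H ∈ S.powersetCard B, (H ∩ Q).card)
        + ∑ H ∈ S.powersetCard B, (f (H ∩ Q) ∩ (H \ Q)).card := by
    rw [← Finset.sum_add_distrib]
    exact Finset.sum_le_sum fun H _ => pointwise H
  have hA : ∑ H ∈ S.powersetCard B, (H ∩ Q).card ≤ k * (N - 1).choose (B - 1) := by
    have := aux_sumA S Q B hQ
    rwa [hQk, hS] at this
  have hBterm : ∑ H ∈ S.powersetCard B, (f (H ∩ Q) ∩ (H \ Q)).card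
      ≤ B * (N - 1).choose (B - 1) := by
    have hmaps : ∀ H ∈ S.powersetCard B, H ∩ Q ∈ Q.powerset := by
      intro H _
      exact Finset.mem_powerset.2 Finset.inter_subset_right
    rw [← Finset.sum_fiberwise_of_maps_to hmaps (fun H => (f (H ∩ Q) ∩ (H \ Q)).card)]
    calc ∑ A ∈ Q.powerset, ∑ H ∈ (S.powersetCard B).filter (fun H => H ∩ Q = A),
            (f (H ∩ Q) ∩ (H \ Q)).card
        = ∑ A ∈ Q.powerset, ∑ H ∈ (S.powersetCard B).filter (fun H => H ∩ Q = A),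
            (f A ∩ (H \ Q)).card := by
          refine Finset.sum_congr rfl fun A _ => Finset.sum_congr rfl fun H hH => ?_
          rw [(Finset.mem_filter.1 hH).2]
      _ ≤ ∑ A ∈ Q.powerset,
            B * (if A.card + 1 ≤ B then (N - k - 1).choose (B - A.card - 1) else 0) := by
          refine Finset.sum_le_sum fun A hAm => ?_
          have hAQ : A ⊆ Q := Finset.mem_powerset.1 hAm
          have := aux_fiber_sum S Q A (f A) B hQ hAQ (hf1 A hAQ) (hf2 A hAQ)
          rwa [hS, hQk] at this
      _ = B * ∑ A ∈ Q.powerset,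
            (if A.card + 1 ≤ B then (N - k - 1).choose (B - A.card - 1) else 0) := by
          rw [Finset.mul_sum]
      _ ≤ B * (N - 1).choose (B - 1) := by
          refine Nat.mul_le_mul_left _ ?_
          rw [Finset.sum_powerset_apply_card
            (fun a => if a + 1 ≤ B then (N - k - 1).choose (B - a - 1) else 0), hQk]
          have hk1 : k + 1 ≤ N := by omega
          have := aux_vandermonde N k B hk1 hB1
          calc ∑ m ∈ Finset.range (k + 1),
                k.choose m • (if m + 1 ≤ B then (N - k - 1).choose (B - m - 1) else 0)
              = ∑ m ∈ Finset.range (k + 1),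
                k.choose m * (if m + 1 ≤ B then (N - k - 1).choose (B - m - 1) else 0) := by
                simp [smul_eq_mul]
            _ ≤ (N - 1).choose (B - 1) := this
  calc ∑ H ∈ S.powersetCard B, (f (H ∩ Q) ∩ H).card
      ≤ _ := hsplit
    _ ≤ k * (N - 1).choose (B - 1) + B * (N - 1).choose (B - 1) := Nat.add_le_add hA hBterm
    _ = (k + B) * (N - 1).choose (B - 1) := by ring

/-- Quantitative Token Economics Trilemma.  If `1 ≤ B` and `2·(k + B) ≤ N`, `Q` is a fixed
query set of size `k`, `H` a uniformly random `B`-element subset of `{1,…,N}`, and `f` any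
selection rule assigning to each possible query outcome `A ⊆ Q` a subset `f A ⊆ {1,…,N}`
with `|f A| ≤ B`, then the expected regret against the offline optimum satisfies
`E[B − |f(H ∩ Q) ∩ H|] ≥ B/2 ≥ 1/2`: the regret is bounded away from zero by a constant
independent of `N`, so no such policy achieves sub-constant regret. -/
theorem stmt_7 (N B k : ℕ) (hB1 : 1 ≤ B) (hN : 2 * (k + B) ≤ N)
    (Q : Finset ℕ) (hQ : Q ⊆ Finset.Icc 1 N) (hQk : Q.card = k)
    (f : Finset ℕ → Finset ℕ)
    (hf1 : ∀ A ⊆ Q, f A ⊆ Finset.Icc 1 N)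
    (hf2 : ∀ A ⊆ Q, (f A).card ≤ B) :
    (B : ℝ) / 2
      ≤ (∑ H ∈ (Finset.Icc 1 N).powersetCard B,
            ((B : ℝ) - ((f (H ∩ Q) ∩ H).card : ℝ)))
          / (N.choose B : ℝ)
    ∧ (1 : ℝ) / 2 ≤ (B : ℝ) / 2 := by
  classical
  have hBN : B ≤ N := by omega
  have hcpos : 0 < N.choose B := Nat.choose_pos hBN
  -- the choose identity  N * C(N-1,B-1) = C(N,B) * B
  have hid : N * (N - 1).choose (B - 1) = N.choose B * B := by
    have h := Nat.add_one_mul_choose_eq (N - 1) (B - 1)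
    have e1 : N - 1 + 1 = N := by omega
    have e2 : B - 1 + 1 = B := by omega
    rwa [e1, e2] at h
  have hkey := aux_key N B k hB1 hN Q hQ hQk f hf1 hf2
  -- 2 * Σ ≤ C(N,B) * B  in ℕ
  have h2 : 2 * (∑ H ∈ (Finset.Icc 1 N).powersetCard B, (f (H ∩ Q) ∩ H).card)
      ≤ N.choose B * B := by
    calc 2 * (∑ H ∈ (Finset.Icc 1 N).powersetCard B, (f (H ∩ Q) ∩ H).card)
        ≤ 2 * ((k + B) * (N - 1).choose (B - 1)) := Nat.mul_le_mul_left _ hkey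
      _ = (2 * (k + B)) * (N - 1).choose (B - 1) := by ring
      _ ≤ N * (N - 1).choose (B - 1) := Nat.mul_le_mul_right _ hN
      _ = N.choose B * B := hid
  constructor
  · have hcR : (0 : ℝ) < (N.choose B : ℝ) := by exact_mod_cast hcpos
    rw [le_div_iff₀ hcR]
    have hsum : (∑ H ∈ (Finset.Icc 1 N).powersetCard B,
          ((B : ℝ) - ((f (H ∩ Q) ∩ H).card : ℝ)))
        = (N.choose B : ℝ) * B
          - ((∑ H ∈ (Finset.Icc 1 N).powersetCard B, (f (H ∩ Q) ∩ H).card : ℕ) : ℝ) := by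
      rw [Finset.sum_sub_distrib, Finset.sum_const, Finset.card_powersetCard,
        Nat.card_Icc, Nat.cast_sum]
      simp only [nsmul_eq_mul]
      norm_num
    rw [hsum]
    have h2R : (2 : ℝ) * ((∑ H ∈ (Finset.Icc 1 N).powersetCard B,
        (f (H ∩ Q) ∩ H).card : ℕ) : ℝ) ≤ (N.choose B : ℝ) * B := by
      exact_mod_cast h2
    linarith
  · have : (1 : ℝ) ≤ (B : ℝ) := by exact_mod_cast hB1
    linarith
end
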